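/- arXiv:2002.00315 — 5 statements merged into one kernel-verified Lean document; each statement's English description precedes it below -/
import Mathlib

section
/- Let K ≥ 1, let Ω ⊆ Δ(K) be a convex set all of whose elements have strictly positive coordinates, and let ψ be twice continuously differentiable on an open convex set containing Ω with positive definite Hessian on Ω, satisfying: (i) ∇²ψ(p) ⪰ diag(C₁/p_1², …, C₁/p_K²) for all p ∈ Ω, for some constant C₁ ≥ 9; (ii) for all p, q ∈ Ω with p_i ≤ 2q_i for every i, (∇²ψ(p))⁻¹ ⪯ 4(∇²ψ(q))⁻¹. Let p_t ∈ Ω, let ℓ̂ ∈ ℝ^K, and let p_{t+1} be a minimizer over Ω of p ↦ ⟨p, ℓ̂⟩ + D_ψ(p, p_t). If there exists z ∈ ℝ with ‖ℓ̂ − z·𝟏‖_{(∇²ψ(p_t))⁻¹} ≤ 1/8, then (1/2)·p_{t,i} ≤ p_{t+1,i} ≤ 2·p_{t,i} for every i ∈ [K]. -/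
/-!
If some coordinate moved by more than half, shrink the step `v = p_{t+1} - p_t` to the largest
`s • v` keeping every coordinate within `p_t / 2` of `p_t`; some coordinate `i₀` then sits exactly
at that bound. Along the segment, `φ t = ψ (p_t + t • v)` is convex, so Taylor's formula and
convexity give a point `q` between `p_t` and `p_t + s • v` with
`s² / 2 · ‖v‖²_{H q} ≤ s · D_ψ(p_{t+1}, p_t) ≤ -s ⟨ℓ̂ - z𝟏, v⟩`,
the last step by optimality of `p_{t+1}` against `p_t`. As `q ≤ 2 p_t`, condition (ii) gives
`‖ℓ̂ - z𝟏‖²_{(H q)⁻¹} ≤ 1/16`, and AM-GM bounds the right-hand side by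
`1/16 + s² / 4 · ‖v‖²_{H q}`, so `s² ‖v‖²_{H q} ≤ 1/4`. But condition (i) at `i₀`, where
`q_{i₀} ≤ 3 s |v_{i₀}|`, gives `s² ‖v‖²_{H q} ≥ 1`.
-/

open Finset

/-- Bregman divergence `D_ψ(x,y) = ψ(x) − ψ(y) − ⟨∇ψ(y), x − y⟩`. -/
noncomputable def breg {K : ℕ} (ψ : (Fin K → ℝ) → ℝ) (x y : Fin K → ℝ) : ℝ :=
  ψ x - ψ y - fderiv ℝ ψ y (x - y)

/-- Quadratic form `vᵀ M v`, i.e. the squared norm `‖v‖²_M`. -/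
def quadForm {K : ℕ} (M : Matrix (Fin K) (Fin K) ℝ) (v : Fin K → ℝ) : ℝ :=
  ∑ i, ∑ j, v i * M i j * v j

open Matrix Set

section QuadForm

variable {K : ℕ}

lemma quadForm_eq_dotProduct_mulVec (M : Matrix (Fin K) (Fin K) ℝ) (v : Fin K → ℝ) :
    quadForm M v = v ⬝ᵥ (M *ᵥ v) := by
  simp [quadForm, dotProduct, mulVec, Finset.mul_sum, mul_assoc]

lemma quadForm_nonneg {M : Matrix (Fin K) (Fin K) ℝ} (hM : M.PosSemidef) (v : Fin K → ℝ) :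
    0 ≤ quadForm M v := by
  simpa [quadForm_eq_dotProduct_mulVec] using hM.dotProduct_mulVec_nonneg v

lemma quadForm_smul (r : ℝ) (M : Matrix (Fin K) (Fin K) ℝ) (v : Fin K → ℝ) :
    quadForm (r • M) v = r * quadForm M v := by
  simp only [quadForm_eq_dotProduct_mulVec, smul_mulVec, dotProduct_smul, smul_eq_mul]

lemma quadForm_le_of_posSemidef_sub {A B : Matrix (Fin K) (Fin K) ℝ} (h : (A - B).PosSemidef)
    (v : Fin K → ℝ) : quadForm B v ≤ quadForm A v := by
  have := quadForm_nonneg h v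
  simp only [quadForm_eq_dotProduct_mulVec, sub_mulVec, dotProduct_sub] at this ⊢
  linarith

lemma mul_sq_le_quadForm_diagonal {d : Fin K → ℝ} (hd : ∀ j, 0 ≤ d j) (v : Fin K → ℝ)
    (i : Fin K) : d i * v i ^ 2 ≤ quadForm (diagonal d) v := by
  have hsum : quadForm (diagonal d) v = ∑ j, d j * v j ^ 2 := by
    simp only [quadForm_eq_dotProduct_mulVec, mulVec_diagonal, dotProduct]
    exact Finset.sum_congr rfl fun j _ => by ring
  rw [hsum]
  exact Finset.single_le_sum (f := fun j => d j * v j ^ 2)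
    (fun j _ => mul_nonneg (hd j) (sq_nonneg _)) (Finset.mem_univ i)

/-- Expansion of `0 ≤ ‖A⁻¹u - r w‖²_A`. -/
lemma two_mul_mul_dotProduct_le_quadForm_inv_add {A : Matrix (Fin K) (Fin K) ℝ} (hA : A.PosDef)
    (r : ℝ) (u w : Fin K → ℝ) : 2 * r * (u ⬝ᵥ w) ≤ quadForm A⁻¹ u + r ^ 2 * quadForm A w := by
  have hunit : IsUnit A.det := isUnit_iff_ne_zero.2 hA.det_pos.ne'
  have hsymm : Aᵀ = A := hA.1
  have hA_inv : A *ᵥ (A⁻¹ *ᵥ u) = u := by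
    rw [mulVec_mulVec, mul_nonsing_inv A hunit, one_mulVec]
  have hcross : w ⬝ᵥ (A *ᵥ (A⁻¹ *ᵥ u)) = (A⁻¹ *ᵥ u) ⬝ᵥ (A *ᵥ w) := by
    rw [dotProduct_mulVec, ← mulVec_transpose, hsymm, dotProduct_comm]
  have := quadForm_nonneg hA.posSemidef (A⁻¹ *ᵥ u - r • w)
  simp only [quadForm_eq_dotProduct_mulVec, mulVec_sub, mulVec_smul, dotProduct_sub,
    sub_dotProduct, dotProduct_smul, smul_dotProduct, smul_eq_mul] at this ⊢
  rw [← hcross, hA_inv, dotProduct_comm (A⁻¹ *ᵥ u) u, dotProduct_comm w u] at this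
  linarith

lemma one_le_sq_mul_quadForm {M : Matrix (Fin K) (Fin K) ℝ} {q v : Fin K → ℝ} {C s : ℝ}
    {i : Fin K} (hM : (M - diagonal fun j => C / q j ^ 2).PosSemidef) (hC : 9 ≤ C)
    (hqi : 0 < q i) (hqs : q i ≤ 3 * (s * |v i|)) : 1 ≤ s ^ 2 * quadForm M v := by
  have hdiag : C / q i ^ 2 * v i ^ 2 ≤ quadForm M v :=
    (mul_sq_le_quadForm_diagonal (fun j => by positivity) v i).trans
      (quadForm_le_of_posSemidef_sub hM v)
  have hsq : q i ^ 2 ≤ 9 * (s ^ 2 * v i ^ 2) := by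
    calc q i ^ 2 ≤ (3 * (s * |v i|)) ^ 2 := pow_le_pow_left₀ hqi.le hqs 2
      _ = 9 * (s ^ 2 * v i ^ 2) := by rw [mul_pow, mul_pow, sq_abs]; norm_num
  have hone : 1 ≤ s ^ 2 * (C / q i ^ 2 * v i ^ 2) := by
    rw [← mul_div_right_comm, mul_div_assoc', one_le_div (by positivity)]
    nlinarith [sq_nonneg (s * v i)]
  exact hone.trans (mul_le_mul_of_nonneg_left hdiag (sq_nonneg s))

end QuadForm

lemma hasDerivAt_comp_add_smul {E F : Type*} [NormedAddCommGroup E] [NormedSpace ℝ E]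
    [NormedAddCommGroup F] [NormedSpace ℝ F] {f : E → F} {x v : E} {t : ℝ}
    (hf : DifferentiableAt ℝ f (x + t • v)) :
    HasDerivAt (fun t : ℝ => f (x + t • v)) (fderiv ℝ f (x + t • v) v) t := by
  have hline : HasDerivAt (fun t : ℝ => x + t • v) v t := by
    simpa using ((hasDerivAt_id t).smul_const v).const_add x
  exact hf.hasFDerivAt.comp_hasDerivAt t hline

lemma hasDerivAt_fderiv_comp_add_smul {E : Type*} [NormedAddCommGroup E] [NormedSpace ℝ E]
    {f : E → ℝ} {x v : E} {t : ℝ} (hf : DifferentiableAt ℝ (fderiv ℝ f) (x + t • v)) :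
    HasDerivAt (fun t : ℝ => fderiv ℝ f (x + t • v) v)
      (fderiv ℝ (fderiv ℝ f) (x + t • v) v v) t := by
  simpa using (hasDerivAt_comp_add_smul hf).clm_apply (hasDerivAt_const t v)

lemma taylor_mean_remainder_lagrange_two {f f' f'' : ℝ → ℝ} {a b : ℝ} (hab : a < b)
    (hf : ∀ t ∈ Icc a b, HasDerivAt f (f' t) t) (hf' : ∀ t ∈ Icc a b, HasDerivAt f' (f'' t) t) :
    ∃ ξ ∈ Ioo a b, f b - f a - f' a * (b - a) = f'' ξ / 2 * (b - a) ^ 2 := by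
  have hba : b - a ≠ 0 := sub_ne_zero.2 hab.ne'
  set c := (f b - f a - f' a * (b - a)) / (b - a) ^ 2 with hc
  set G : ℝ → ℝ := fun t => f b - f t - f' t * (b - t) - c * (b - t) ^ 2
  have hG : ∀ t ∈ Icc a b, HasDerivAt G ((b - t) * (2 * c - f'' t)) t := by
    intro t ht
    have hlin : HasDerivAt (fun u : ℝ => b - u) (-1) t := by
      simpa using (hasDerivAt_id t).const_sub b
    refine ((((hasDerivAt_const t (f b)).sub (hf t ht)).sub ((hf' t ht).mul hlin)).sub
      ((hlin.pow 2).const_mul c)).congr_deriv ?_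
    push_cast
    ring
  have hGa : G a = G b := by
    simp only [G, hc, sub_self]
    field_simp
    simp
  obtain ⟨ξ, hξ, hξ0⟩ := exists_hasDerivAt_eq_zero hab
    (fun t ht => (hG t ht).continuousAt.continuousWithinAt) hGa
    (fun t ht => hG t (Ioo_subset_Icc_self ht))
  have hc2 : f'' ξ = 2 * c := by
    rcases mul_eq_zero.1 hξ0 with h | h
    · linarith [hξ.2]
    · linarith
  refine ⟨ξ, hξ, ?_⟩
  rw [hc2, hc]
  field_simp

/-- Convexity of `f` on `[0, 1]` bounds the Taylor remainder at `s` by `s` times that at `1`. -/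
lemma exists_sq_mul_deriv2_le {f f' f'' : ℝ → ℝ} (hf : ∀ t ∈ Icc (0 : ℝ) 1, HasDerivAt f (f' t) t)
    (hf' : ∀ t ∈ Icc (0 : ℝ) 1, HasDerivAt f' (f'' t) t) (hf'' : ∀ t ∈ Icc (0 : ℝ) 1, 0 ≤ f'' t)
    {s : ℝ} (hs : s ∈ Ioc (0 : ℝ) 1) :
    ∃ ξ ∈ Ioo 0 s, s ^ 2 / 2 * f'' ξ ≤ s * (f 1 - f 0 - f' 0) := by
  have hconv : ConvexOn ℝ (Icc (0 : ℝ) 1) f := by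
    refine convexOn_of_hasDerivWithinAt2_nonneg (f' := f') (f'' := f'') (convex_Icc 0 1)
      (fun t ht => (hf t ht).continuousAt.continuousWithinAt) ?_ ?_ ?_ <;> rw [interior_Icc]
    · exact fun t ht => (hf t (Ioo_subset_Icc_self ht)).hasDerivWithinAt
    · exact fun t ht => (hf' t (Ioo_subset_Icc_self ht)).hasDerivWithinAt
    · exact fun t ht => hf'' t (Ioo_subset_Icc_self ht)
  have hsub : Icc 0 s ⊆ Icc (0 : ℝ) 1 := Icc_subset_Icc le_rfl hs.2
  obtain ⟨ξ, hξ, hξeq⟩ := taylor_mean_remainder_lagrange_two hs.1 (fun t ht => hf t (hsub ht))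
    (fun t ht => hf' t (hsub ht))
  have hfs : f s ≤ (1 - s) * f 0 + s * f 1 := by
    simpa using hconv.2 (left_mem_Icc.2 zero_le_one) (right_mem_Icc.2 zero_le_one)
      (sub_nonneg.2 hs.2) hs.1.le (by ring)
  refine ⟨ξ, hξ, ?_⟩
  rw [sub_zero] at hξeq
  linarith

lemma exists_largest_scale_abs_le_half {ι : Type*} [Fintype ι] {p v : ι → ℝ}
    (hp : ∀ i, 0 < p i) {i₁ : ι} (hi₁ : p i₁ / 2 < |v i₁|) :
    ∃ s ∈ Ioo (0 : ℝ) 1, (∀ j, s * |v j| ≤ p j / 2) ∧ ∃ i, s * |v i| = p i / 2 := by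
  have hne : (univ : Finset ι).Nonempty := ⟨i₁, mem_univ _⟩
  set g : ι → ℝ := fun j => 2 * |v j| / p j
  obtain ⟨i, -, hi⟩ := exists_mem_eq_sup' hne g
  have hg_le : ∀ j, g j ≤ univ.sup' hne g := fun j => le_sup' g (mem_univ j)
  have hM : 1 < univ.sup' hne g :=
    ((one_lt_div (hp i₁)).2 (by linarith)).trans_le (hg_le i₁)
  refine ⟨(univ.sup' hne g)⁻¹, ⟨by positivity, inv_lt_one_of_one_lt₀ hM⟩, fun j => ?_, i, ?_⟩
  · have := (div_le_iff₀ (hp j)).1 (hg_le j)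
    rw [inv_mul_le_iff₀ (by positivity)]
    linarith
  · have hvi : v i ≠ 0 := fun h0 => by simp [hi, g, h0] at hM; linarith
    rw [hi, show g i = 2 * |v i| / p i from rfl]
    field_simp [(hp i).ne', abs_ne_zero.2 hvi]

lemma add_smul_apply_le {ι : Type*} {p v : ι → ℝ} {ξ s : ℝ} (hξ : ξ ∈ Icc 0 s) (j : ι) :
    (p + ξ • v) j ≤ p j + s * |v j| := by
  have : ξ * v j ≤ s * |v j| :=
    (mul_le_mul_of_nonneg_left (le_abs_self _) hξ.1).trans
      (mul_le_mul_of_nonneg_right hξ.2 (abs_nonneg _))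
  simpa using this

section Bregman

variable {K : ℕ}

lemma exists_sq_mul_quadForm_le_breg {Ω U : Set (Fin K → ℝ)} (hΩ : Convex ℝ Ω) (hU : IsOpen U)
    (hΩU : Ω ⊆ U) {ψ : (Fin K → ℝ) → ℝ} (hψ : ContDiffOn ℝ 2 ψ U)
    {H : (Fin K → ℝ) → Matrix (Fin K) (Fin K) ℝ}
    (hHess : ∀ p ∈ U, ∀ v, fderiv ℝ (fderiv ℝ ψ) p v v = quadForm (H p) v)
    (hH : ∀ p ∈ Ω, (H p).PosSemidef) {p p' : Fin K → ℝ} (hp : p ∈ Ω) (hp' : p' ∈ Ω) {s : ℝ}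
    (hs : s ∈ Ioc (0 : ℝ) 1) :
    ∃ ξ ∈ Ioo 0 s, s ^ 2 / 2 * quadForm (H (p + ξ • (p' - p))) (p' - p) ≤ s * breg ψ p' p := by
  set v := p' - p
  have hseg : ∀ t ∈ Icc (0 : ℝ) 1, p + t • v ∈ Ω := fun t ht => hΩ.add_smul_sub_mem hp hp' ht
  have hdψ : ∀ x ∈ Ω, DifferentiableAt ℝ ψ x := fun x hx =>
    (hψ.differentiableOn (by norm_num)).differentiableAt (hU.mem_nhds (hΩU hx))
  have hd2ψ : ∀ x ∈ Ω, DifferentiableAt ℝ (fderiv ℝ ψ) x := fun x hx =>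
    ((hψ.fderiv_of_isOpen (m := 1) hU (by norm_num)).differentiableOn
      (by norm_num)).differentiableAt (hU.mem_nhds (hΩU hx))
  have hbreg : ψ (p + (1 : ℝ) • v) - ψ (p + (0 : ℝ) • v) - fderiv ℝ ψ (p + (0 : ℝ) • v) v
      = breg ψ p' p := by
    simp [breg, v]
  rw [← hbreg]
  exact exists_sq_mul_deriv2_le (f := fun t => ψ (p + t • v))
    (fun t ht => hasDerivAt_comp_add_smul (hdψ _ (hseg t ht)))
    (fun t ht => (hasDerivAt_fderiv_comp_add_smul (hd2ψ _ (hseg t ht))).congr_deriv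
      (hHess _ (hΩU (hseg t ht)) v))
    (fun t ht => quadForm_nonneg (hH _ (hseg t ht)) v) hs

/-- The shift by `z` is invisible because `p' - p` has zero sum. -/
lemma breg_le_neg_dotProduct {ψ : (Fin K → ℝ) → ℝ} {p p' l : Fin K → ℝ}
    (hmin : (∑ i, p' i * l i) + breg ψ p' p ≤ (∑ i, p i * l i) + breg ψ p p)
    (hsum : ∑ i, p' i = ∑ i, p i) (z : ℝ) :
    breg ψ p' p ≤ -((fun i => l i - z) ⬝ᵥ (p' - p)) := by
  have hlin : (fun i => l i - z) ⬝ᵥ (p' - p) = ∑ i, p' i * l i - ∑ i, p i * l i := by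
    have hdot : (fun i => l i - z) ⬝ᵥ (p' - p)
        = (∑ i, p' i * l i - ∑ i, p i * l i) - z * (∑ i, p' i - ∑ i, p i) := by
      simp only [dotProduct, Pi.sub_apply, mul_sum, ← sum_sub_distrib]
      exact sum_congr rfl fun i _ => by ring
    rw [hdot, hsum, sub_self, mul_zero, sub_zero]
  rw [show breg ψ p p = 0 by simp [breg]] at hmin
  linarith

end Bregman

theorem stmt1_general (K : ℕ)
    (Ω : Set (Fin K → ℝ)) (hΩconv : Convex ℝ Ω) (hΩsub : Ω ⊆ stdSimplex ℝ (Fin K))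
    (hΩpos : ∀ p ∈ Ω, ∀ i, 0 < p i)
    (U : Set (Fin K → ℝ)) (hUopen : IsOpen U) (hΩU : Ω ⊆ U)
    (ψ : (Fin K → ℝ) → ℝ) (hψ : ContDiffOn ℝ 2 ψ U)
    (H : (Fin K → ℝ) → Matrix (Fin K) (Fin K) ℝ)
    (hHess : ∀ p ∈ U, ∀ v w : Fin K → ℝ,
      fderiv ℝ (fderiv ℝ ψ) p w v = ∑ i, ∑ j, w i * H p i j * v j)
    (hPD : ∀ p ∈ Ω, (H p).PosDef)
    (C₁ : ℝ) (hC₁ : 9 ≤ C₁)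
    (hi : ∀ p ∈ Ω, (H p - Matrix.diagonal fun i => C₁ / p i ^ 2).PosSemidef)
    (hii : ∀ p ∈ Ω, ∀ q ∈ Ω, (∀ i, p i ≤ 2 * q i) →
      ((4 : ℝ) • (H q)⁻¹ - (H p)⁻¹).PosSemidef)
    (pt : Fin K → ℝ) (hpt : pt ∈ Ω)
    (l : Fin K → ℝ)
    (pt1 : Fin K → ℝ) (hpt1 : pt1 ∈ Ω)
    (hmin : ∀ q ∈ Ω,
      (∑ i, pt1 i * l i) + breg ψ pt1 pt ≤ (∑ i, q i * l i) + breg ψ q pt)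
    (hz : ∃ z : ℝ, Real.sqrt (quadForm (H pt)⁻¹ (fun i => l i - z)) ≤ 1 / 8) :
    ∀ i, (1 / 2) * pt i ≤ pt1 i ∧ pt1 i ≤ 2 * pt i := by
  have hpos := hΩpos pt hpt
  suffices hclose : ∀ i, |pt1 i - pt i| ≤ pt i / 2 by
    intro i
    have := abs_le.1 (hclose i)
    constructor <;> linarith [hpos i]
  by_contra! ⟨i₁, hi₁⟩
  obtain ⟨s, hs, hsv, i₀, hsi₀⟩ := exists_largest_scale_abs_le_half hpos (v := pt1 - pt) hi₁
  obtain ⟨ξ, hξ, hξle⟩ := exists_sq_mul_quadForm_le_breg hΩconv hUopen hΩU hψ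
    (fun p hp v => hHess p hp v v) (fun p hp => (hPD p hp).posSemidef) hpt hpt1 ⟨hs.1, hs.2.le⟩
  set q := pt + ξ • (pt1 - pt)
  have hqΩ : q ∈ Ω := hΩconv.add_smul_sub_mem hpt hpt1 ⟨hξ.1.le, hξ.2.le.trans hs.2.le⟩
  have hq : ∀ j, q j ≤ pt j + s * |(pt1 - pt) j| := add_smul_apply_le ⟨hξ.1.le, hξ.2.le⟩
  obtain ⟨z, hz⟩ := hz
  have hopt := breg_le_neg_dotProduct (hmin pt hpt)
    (by rw [(hΩsub hpt1).2, (hΩsub hpt).2]) z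
  have hwq : quadForm (H q)⁻¹ (fun i => l i - z) ≤ 1 / 16 := by
    have hle := quadForm_le_of_posSemidef_sub
      (hii q hqΩ pt hpt fun j => by linarith [hq j, hsv j, hpos j]) (fun i => l i - z)
    rw [quadForm_smul] at hle
    linarith [(Real.sqrt_le_iff.1 hz).2]
  have hamgm := two_mul_mul_dotProduct_le_quadForm_inv_add (hPD q hqΩ) (-(s / 2))
    (fun i => l i - z) (pt1 - pt)
  have hlow : 1 ≤ s ^ 2 * quadForm (H q) (pt1 - pt) :=
    one_le_sq_mul_quadForm (hi q hqΩ) hC₁ (hΩpos q hqΩ i₀) (by linarith [hq i₀])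
  linarith [mul_le_mul_of_nonneg_left hopt hs.1.le]

/-- Multiplicative stability of the OMD update (Lemma 3 of the paper). -/
theorem stmt1 (K : ℕ) (hK : 1 ≤ K)
    (Ω : Set (Fin K → ℝ)) (hΩconv : Convex ℝ Ω) (hΩsub : Ω ⊆ stdSimplex ℝ (Fin K))
    (hΩpos : ∀ p ∈ Ω, ∀ i, 0 < p i)
    (U : Set (Fin K → ℝ)) (hUopen : IsOpen U) (hUconv : Convex ℝ U) (hΩU : Ω ⊆ U)
    (ψ : (Fin K → ℝ) → ℝ) (hψ : ContDiffOn ℝ 2 ψ U)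
    (H : (Fin K → ℝ) → Matrix (Fin K) (Fin K) ℝ)
    (hHess : ∀ p ∈ U, ∀ v w : Fin K → ℝ,
      fderiv ℝ (fderiv ℝ ψ) p w v = ∑ i, ∑ j, w i * H p i j * v j)
    (hPD : ∀ p ∈ Ω, (H p).PosDef)
    (C₁ : ℝ) (hC₁ : 9 ≤ C₁)
    (hi : ∀ p ∈ Ω, (H p - Matrix.diagonal fun i => C₁ / p i ^ 2).PosSemidef)
    (hii : ∀ p ∈ Ω, ∀ q ∈ Ω, (∀ i, p i ≤ 2 * q i) →
      ((4 : ℝ) • (H q)⁻¹ - (H p)⁻¹).PosSemidef)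
    (pt : Fin K → ℝ) (hpt : pt ∈ Ω)
    (l : Fin K → ℝ)
    (pt1 : Fin K → ℝ) (hpt1 : pt1 ∈ Ω)
    (hmin : ∀ q ∈ Ω,
      (∑ i, pt1 i * l i) + breg ψ pt1 pt ≤ (∑ i, q i * l i) + breg ψ q pt)
    (hz : ∃ z : ℝ, Real.sqrt (quadForm (H pt)⁻¹ (fun i => l i - z)) ≤ 1 / 8) :
    ∀ i, (1 / 2) * pt i ≤ pt1 i ∧ pt1 i ≤ 2 * pt i :=
  stmt1_general K Ω hΩconv hΩsub hΩpos U hUopen hΩU ψ hψ H hHess hPD C₁ hC₁ hi hii pt hpt l pt1 hpt1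
    hmin hz
end

section
/- Let K ≥ 2 and let p ∈ Δ(K) satisfy 0 < p_i for every i ∈ [K]. Let ℓ ∈ ℝ^K satisfy 0 ≤ ℓ_i ≤ max{1/p_i, 1/(1 − p_i)} for every i. Then there exists z ≥ 0 such that Σ_{i=1}^K p_i²·(ℓ_i − z)² ≤ K. -/
/-!
If some `p j > 1/2`, shift by `z = l j`; otherwise take `z = 0`. In both cases every
`p i * l i` and `p i * z` lies in `[0, 1]`, because for `i ≠ j` the weight `p i` is below
both `p j` and `1 - p j` (and `p i ≤ 1 - p i`). Hence each of the `K` summands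
`(p i * l i - p i * z) ^ 2` is at most `1`.
-/

open Finset

lemma add_le_one_of_mem_stdSimplex {ι : Type*} [Fintype ι] {p : ι → ℝ}
    (hp : p ∈ stdSimplex ℝ ι) {i j : ι} (hij : i ≠ j) : p i + p j ≤ 1 :=
  hp.2 ▸ add_le_sum (fun k _ => hp.1 k) (mem_univ i) (mem_univ j) hij

lemma mul_le_one_of_le_max_inv {q p l : ℝ} (hq : 0 ≤ q) (hqp : q ≤ p) (hqp' : q ≤ 1 - p)
    (hl : l ≤ max (1 / p) (1 / (1 - p))) : q * l ≤ 1 :=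
  calc q * l ≤ q * max (1 / p) (1 / (1 - p)) := mul_le_mul_of_nonneg_left hl hq
    _ = max (q / p) (q / (1 - p)) := by rw [mul_max_of_nonneg _ _ hq, mul_one_div, mul_one_div]
    _ ≤ 1 := max_le (div_le_one_of_le₀ hqp (hq.trans hqp)) (div_le_one_of_le₀ hqp' (hq.trans hqp'))

lemma sq_mul_sub_le_one {q l z : ℝ} (hq : 0 ≤ q) (hl : 0 ≤ l) (hz : 0 ≤ z)
    (hql : q * l ≤ 1) (hqz : q * z ≤ 1) : q ^ 2 * (l - z) ^ 2 ≤ 1 := by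
  rw [← mul_pow, mul_sub, sq_le_one_iff_abs_le_one]
  exact abs_sub_le_of_nonneg_of_le (mul_nonneg hq hl) hql (mul_nonneg hq hz) hqz

theorem stmt2_general (K : ℕ)
    (p : Fin K → ℝ) (hp : p ∈ stdSimplex ℝ (Fin K))
    (l : Fin K → ℝ)
    (hl : ∀ i, 0 ≤ l i ∧ l i ≤ max (1 / p i) (1 / (1 - p i))) :
    ∃ z : ℝ, 0 ≤ z ∧ ∑ i, p i ^ 2 * (l i - z) ^ 2 ≤ (K : ℝ) := by
  suffices ∃ z : ℝ, 0 ≤ z ∧ ∀ i, p i ^ 2 * (l i - z) ^ 2 ≤ 1 by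
    obtain ⟨z, hz, hterm⟩ := this
    refine ⟨z, hz, ?_⟩
    simpa using sum_le_card_nsmul univ _ 1 fun i _ => hterm i
  by_cases hbig : ∃ j, 1 / 2 < p j
  · obtain ⟨j, hj⟩ := hbig
    refine ⟨l j, (hl j).1, fun i => ?_⟩
    rcases eq_or_ne i j with rfl | hij
    · simp
    have hsum := add_le_one_of_mem_stdSimplex hp hij
    exact sq_mul_sub_le_one (hp.1 i) (hl i).1 (hl j).1
      (mul_le_one_of_le_max_inv (hp.1 i) le_rfl (by linarith) (hl i).2)
      (mul_le_one_of_le_max_inv (hp.1 i) (by linarith) (by linarith) (hl j).2)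
  · simp only [not_exists, not_lt] at hbig
    refine ⟨0, le_rfl, fun i => ?_⟩
    exact sq_mul_sub_le_one (hp.1 i) (hl i).1 le_rfl
      (mul_le_one_of_le_max_inv (hp.1 i) le_rfl (by linarith [hbig i]) (hl i).2) (by simp)

/-- Existence of a loss shift making the weighted squared norm at most `K`
(Lemma 4 of the paper). -/
theorem stmt2 (K : ℕ) (hK : 2 ≤ K)
    (p : Fin K → ℝ) (hp : p ∈ stdSimplex ℝ (Fin K)) (hpos : ∀ i, 0 < p i)
    (l : Fin K → ℝ)
    (hl : ∀ i, 0 ≤ l i ∧ l i ≤ max (1 / p i) (1 / (1 - p i))) :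
    ∃ z : ℝ, 0 ≤ z ∧ ∑ i, p i ^ 2 * (l i - z) ^ 2 ≤ (K : ℝ) :=
  stmt2_general K p hp l hl
end

section
/- Let K ≥ 2, let S ⊆ [K], and let p ∈ Δ(K) satisfy 0 < p_i for every i ∈ [K]. Let ℓ ∈ ℝ^K be nonnegative and satisfy ℓ_i·(1 − p_i) ≤ 1 for every i ∉ S. Then there exists z ≥ 0 such that Σ_{i=1}^K p_i·(ℓ_i − z)² ≤ Σ_{i∈S} p_i·ℓ_i² + 2·Σ_{i∉S} p_i·ℓ_i. -/
/-!
Take `z` to be the `p`-mean of `l`, so that the left side is the variance `∑ p l² - z²`.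
Off `S`, the hypothesis reads `l ≤ 1 + p l ≤ 1 + z`, hence `p l² ≤ (1 + z) p l`; summing,
with `c = ∑_{Sᶜ} p l ≤ z`, the variance is at most `∑_S p l² + c + z (c - z) ≤ ∑_S p l² + 2c`.
-/

open Finset

theorem sum_mul_sub_weightedMean_sq {ι : Type*} (s : Finset ι) (p l : ι → ℝ)
    (hp : ∑ i ∈ s, p i = 1) :
    ∑ i ∈ s, p i * (l i - ∑ j ∈ s, p j * l j) ^ 2 =
      ∑ i ∈ s, p i * l i ^ 2 - (∑ j ∈ s, p j * l j) ^ 2 := by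
  set z := ∑ j ∈ s, p j * l j
  calc ∑ i ∈ s, p i * (l i - z) ^ 2
      = ∑ i ∈ s, p i * l i ^ 2 - 2 * z * ∑ i ∈ s, p i * l i + z ^ 2 * ∑ i ∈ s, p i := by
        rw [mul_sum _ _ (2 * z), mul_sum _ _ (z ^ 2), ← sum_sub_distrib, ← sum_add_distrib]
        exact sum_congr rfl fun i _ => by ring
    _ = ∑ i ∈ s, p i * l i ^ 2 - z ^ 2 := by rw [hp]; ring

theorem mul_sq_le_of_mul_one_sub_le {p l z : ℝ} (hp : 0 ≤ p) (hl0 : 0 ≤ l)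
    (hl : l * (1 - p) ≤ 1) (hz : p * l ≤ z) :
    p * l ^ 2 ≤ (1 + z) * (p * l) := by
  have hpl : 0 ≤ p * l := mul_nonneg hp hl0
  calc p * l ^ 2 = (p * l) * l := by ring
    _ ≤ (p * l) * (1 + p * l) := by gcongr; linarith
    _ ≤ (1 + z) * (p * l) := by nlinarith

theorem stmt3_general (K : ℕ) (S : Finset (Fin K))
    (p : Fin K → ℝ) (hp : p ∈ stdSimplex ℝ (Fin K))
    (l : Fin K → ℝ) (hl0 : ∀ i, 0 ≤ l i)
    (hl : ∀ i ∉ S, l i * (1 - p i) ≤ 1) :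
    ∃ z : ℝ, 0 ≤ z ∧
      ∑ i, p i * (l i - z) ^ 2 ≤
        ∑ i ∈ S, p i * l i ^ 2 + 2 * ∑ i ∈ Sᶜ, p i * l i := by
  have hpl : ∀ i, 0 ≤ p i * l i := fun i => mul_nonneg (hp.1 i) (hl0 i)
  set z := ∑ i, p i * l i
  set c := ∑ i ∈ Sᶜ, p i * l i
  have hc0 : 0 ≤ c := sum_nonneg fun i _ => hpl i
  have hcz : c ≤ z := sum_le_sum_of_subset_of_nonneg (subset_univ _) fun i _ _ => hpl i
  have hcompl : ∑ i ∈ Sᶜ, p i * l i ^ 2 ≤ (1 + z) * c := by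
    rw [mul_sum]
    exact sum_le_sum fun i hi => mul_sq_le_of_mul_one_sub_le (hp.1 i) (hl0 i)
      (hl i (mem_compl.mp hi)) (single_le_sum (fun j _ => hpl j) (mem_univ i))
  refine ⟨z, sum_nonneg fun i _ => hpl i, ?_⟩
  calc ∑ i, p i * (l i - z) ^ 2
      = ∑ i ∈ S, p i * l i ^ 2 + ∑ i ∈ Sᶜ, p i * l i ^ 2 - z ^ 2 := by
        rw [sum_mul_sub_weightedMean_sq _ _ _ hp.2, sum_add_sum_compl]
    _ ≤ ∑ i ∈ S, p i * l i ^ 2 + (1 + z) * c - z ^ 2 := by gcongr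
    _ ≤ ∑ i ∈ S, p i * l i ^ 2 + 2 * c := by nlinarith

/-- Loss-shifting bound used in the proof of Theorem 2 of the paper. -/
theorem stmt3 (K : ℕ) (hK : 2 ≤ K) (S : Finset (Fin K))
    (p : Fin K → ℝ) (hp : p ∈ stdSimplex ℝ (Fin K)) (hpos : ∀ i, 0 < p i)
    (l : Fin K → ℝ) (hl0 : ∀ i, 0 ≤ l i)
    (hl : ∀ i ∉ S, l i * (1 - p i) ≤ 1) :
    ∃ z : ℝ, 0 ≤ z ∧
      ∑ i, p i * (l i - z) ^ 2 ≤
        ∑ i ∈ S, p i * l i ^ 2 + 2 * ∑ i ∈ Sᶜ, p i * l i :=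
  stmt3_general K S p hp l hl0 hl
end

section
/- Let K ≥ 2, let S ⊆ [K], and let p ∈ Δ(K) satisfy 0 < p_i for every i ∈ [K]. Let ℓ ∈ ℝ^K be nonnegative and satisfy p_i·ℓ_i ≤ 1 for every i ∈ S and ℓ_i·(1 − p_i) ≤ 1 for every i ∉ S. Then there exists z ≥ 0 such that Σ_{i∈S} p_i²·(ℓ_i − z)² + Σ_{i∉S} p_i·(ℓ_i − z)² ≤ 2·Σ_{i=1}^K p_i·ℓ_i. -/
/-!
If some arm `j ∉ S` carries probability `p j > 1/2`, shift by `z = ℓ j`: its own term vanishes,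
every other arm has `p i < 1/2`, and the cost `(1 - p j) ℓ j ^ 2` of the shift is paid by
`(1 - p j) ℓ j ≤ 1 < 2 p j`. Otherwise take `z = 0`. In both cases each arm `i ∉ S` has
`p i ≤ 1/2`, hence `ℓ i ≤ 2`, and each term is at most `2 p i ℓ i + p i z ^ 2`.
-/

open Finset

lemma le_two_of_mul_one_sub_le {l q : ℝ} (hl : 0 ≤ l) (hq : q ≤ 1 / 2) (h : l * (1 - q) ≤ 1) :
    l ≤ 2 := by
  nlinarith

lemma sq_mul_sub_sq_le {p l z : ℝ} (hp0 : 0 ≤ p) (hp1 : p ≤ 1) (hl : 0 ≤ l) (hz : 0 ≤ z)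
    (hpl : p * l ≤ 1) : p ^ 2 * (l - z) ^ 2 ≤ 2 * (p * l) + p * z ^ 2 := by
  nlinarith [mul_nonneg (mul_nonneg hp0 hl) (sub_nonneg.2 hpl), mul_nonneg hp0 hp0,
    mul_nonneg (mul_nonneg hp0 hp0) (mul_nonneg hl hz), mul_nonneg (mul_nonneg hp0 (sq_nonneg z))
    (sub_nonneg.2 hp1)]

lemma mul_sub_sq_le {p l z : ℝ} (hp : 0 ≤ p) (hl0 : 0 ≤ l) (hl2 : l ≤ 2) (hz : 0 ≤ z) :
    p * (l - z) ^ 2 ≤ 2 * (p * l) + p * z ^ 2 := by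
  nlinarith [mul_nonneg (mul_nonneg hp hl0) (sub_nonneg.2 hl2), mul_nonneg (mul_nonneg hp hl0) hz]

lemma sum_le_sum_erase_of_eq_zero {ι M : Type*} [Fintype ι] [DecidableEq ι] [AddCommMonoid M]
    [PartialOrder M] [IsOrderedAddMonoid M] {f g : ι → M} {j : ι}
    (hj : f j = 0) (h : ∀ i ≠ j, f i ≤ g i) : ∑ i, f i ≤ ∑ i ∈ univ.erase j, g i := by
  rw [← add_sum_erase _ _ (mem_univ j), hj, zero_add]
  exact sum_le_sum fun i hi => h i (ne_of_mem_erase hi)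

lemma ite_mul_sub_sq_le {s : Prop} [Decidable s] {p l z : ℝ} (hp0 : 0 ≤ p) (hp1 : p ≤ 1)
    (hl : 0 ≤ l) (hz : 0 ≤ z) (hs : s → p * l ≤ 1) (hns : ¬s → l ≤ 2) :
    (if s then p ^ 2 else p) * (l - z) ^ 2 ≤ 2 * (p * l) + p * z ^ 2 := by
  split_ifs with h
  · exact sq_mul_sub_sq_le hp0 hp1 hl hz (hs h)
  · exact mul_sub_sq_le hp0 hl (hns h) hz

section

variable {ι : Type*} [Fintype ι] [DecidableEq ι]

/-- The stability term after shifting all losses by `z`; arms in `S` observe themselves. -/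
def shiftedLoss (S : Finset ι) (p l : ι → ℝ) (z : ℝ) : ℝ :=
  ∑ i ∈ S, p i ^ 2 * (l i - z) ^ 2 + ∑ i ∈ Sᶜ, p i * (l i - z) ^ 2

lemma shiftedLoss_eq_sum_ite (S : Finset ι) (p l : ι → ℝ) (z : ℝ) :
    shiftedLoss S p l z = ∑ i, (if i ∈ S then p i ^ 2 else p i) * (l i - z) ^ 2 := by
  rw [shiftedLoss, ← sum_add_sum_compl S]
  congr 1 <;> refine sum_congr rfl fun i hi => ?_
  · rw [if_pos hi]
  · rw [if_neg (mem_compl.1 hi)]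

variable {S : Finset ι} {p l : ι → ℝ}

lemma shiftedLoss_zero_le (hp : p ∈ stdSimplex ℝ ι) (hl0 : ∀ i, 0 ≤ l i)
    (hlS : ∀ i ∈ S, p i * l i ≤ 1) (hlSc : ∀ i ∉ S, l i * (1 - p i) ≤ 1)
    (hlight : ∀ i ∉ S, p i ≤ 1 / 2) :
    shiftedLoss S p l 0 ≤ 2 * ∑ i, p i * l i := by
  rw [shiftedLoss_eq_sum_ite, mul_sum]
  refine sum_le_sum fun i _ => ?_
  have := ite_mul_sub_sq_le (hp.1 i) (mem_Icc_of_mem_stdSimplex hp i).2 (hl0 i) le_rfl (hlS i)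
    fun hi => le_two_of_mul_one_sub_le (hl0 i) (hlight i hi) (hlSc i hi)
  simpa using this

lemma shiftedLoss_self_le (hp : p ∈ stdSimplex ℝ ι) (hl0 : ∀ i, 0 ≤ l i)
    (hlS : ∀ i ∈ S, p i * l i ≤ 1) (hlSc : ∀ i ∉ S, l i * (1 - p i) ≤ 1)
    {j : ι} (hjS : j ∉ S) (hheavy : 1 / 2 < p j) :
    shiftedLoss S p l (l j) ≤ 2 * ∑ i, p i * l i := by
  have hlight : ∀ i ≠ j, p i ≤ 1 / 2 := fun i hij => by
    linarith [add_le_sum (fun k _ => hp.1 k) (mem_univ i) (mem_univ j) hij, hp.2]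
  have hrest : ∑ i ∈ univ.erase j, p i = 1 - p j := by rw [sum_erase_eq_sub (mem_univ j), hp.2]
  have hshift : (1 - p j) * l j ^ 2 ≤ 2 * (p j * l j) := by
    nlinarith [hlSc j hjS, hl0 j]
  rw [shiftedLoss_eq_sum_ite]
  calc ∑ i, (if i ∈ S then p i ^ 2 else p i) * (l i - l j) ^ 2
      ≤ ∑ i ∈ univ.erase j, (2 * (p i * l i) + p i * l j ^ 2) :=
        sum_le_sum_erase_of_eq_zero (by simp) fun i hij =>
          ite_mul_sub_sq_le (hp.1 i) (mem_Icc_of_mem_stdSimplex hp i).2 (hl0 i) (hl0 j) (hlS i)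
            fun hi => le_two_of_mul_one_sub_le (hl0 i) (hlight i hij) (hlSc i hi)
    _ = 2 * ∑ i ∈ univ.erase j, p i * l i + (1 - p j) * l j ^ 2 := by
        rw [sum_add_distrib, ← mul_sum, ← sum_mul, hrest]
    _ ≤ 2 * ∑ i, p i * l i := by
        rw [← add_sum_erase _ _ (mem_univ j)]
        linarith

end

theorem stmt4_general (K : ℕ) (S : Finset (Fin K))
    (p : Fin K → ℝ) (hp : p ∈ stdSimplex ℝ (Fin K))
    (l : Fin K → ℝ) (hl0 : ∀ i, 0 ≤ l i)
    (hlS : ∀ i ∈ S, p i * l i ≤ 1)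
    (hlSc : ∀ i ∉ S, l i * (1 - p i) ≤ 1) :
    ∃ z : ℝ, 0 ≤ z ∧
      ∑ i ∈ S, p i ^ 2 * (l i - z) ^ 2 + ∑ i ∈ Sᶜ, p i * (l i - z) ^ 2 ≤
        2 * ∑ i, p i * l i := by
  by_cases hheavy : ∃ j ∉ S, 1 / 2 < p j
  · obtain ⟨j, hjS, hj⟩ := hheavy
    exact ⟨l j, hl0 j, shiftedLoss_self_le hp hl0 hlS hlSc hjS hj⟩
  · push Not at hheavy
    exact ⟨0, le_rfl, shiftedLoss_zero_le hp hl0 hlS hlSc hheavy⟩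

/-- Loss-shifting bound used in the proof of Theorem 3 of the paper. -/
theorem stmt4 (K : ℕ) (hK : 2 ≤ K) (S : Finset (Fin K))
    (p : Fin K → ℝ) (hp : p ∈ stdSimplex ℝ (Fin K)) (hpos : ∀ i, 0 < p i)
    (l : Fin K → ℝ) (hl0 : ∀ i, 0 ≤ l i)
    (hlS : ∀ i ∈ S, p i * l i ≤ 1)
    (hlSc : ∀ i ∉ S, l i * (1 - p i) ≤ 1) :
    ∃ z : ℝ, 0 ≤ z ∧
      ∑ i ∈ S, p i ^ 2 * (l i - z) ^ 2 + ∑ i ∈ Sᶜ, p i * (l i - z) ^ 2 ≤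
        2 * ∑ i, p i * l i :=
  stmt4_general K S p hp l hl0 hlS hlSc
end

section
/- Fix integers K ≥ 2 and T ≥ 2K, a subset S ⊆ [K], a real η > 0, and set c = 64K. Let Ω = {p ∈ Δ(K) : p_i ≥ 1/T for all i} and ψ(p) = (1/η)·Σ_{i=1}^K p_i ln p_i + c·Σ_{i=1}^K ln(1/p_i). Let p_1 ∈ Ω, and for each t = 1,…,T let ℓ̂_t ∈ ℝ^K satisfy 0 ≤ ℓ̂_{t,i} ≤ 1/p_{t,i} for i ∈ S and 0 ≤ ℓ̂_{t,i} ≤ 1/(1 − p_{t,i}) for i ∉ S, and let p_{t+1} be a minimizer over Ω of p ↦ ⟨p, ℓ̂_t⟩ + D_ψ(p, p_t). Then for every u ∈ Ω: Σ_{t=1}^T ⟨p_t − u, ℓ̂_t⟩ ≤ D_ψ(u, p_1) + 8η·Σ_{t=1}^T Σ_{i∈S} p_{t,i}·ℓ̂_{t,i}² + 16η·Σ_{t=1}^T Σ_{i∉S} p_{t,i}·ℓ̂_{t,i}. -/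
/-!
The usual online-mirror-descent analysis: first-order optimality of each update and the
three-point identity bound the instantaneous regret `⟨p_t - u, ℓ̂_t⟩` by the telescoping
difference `D(u, p_t) - D(u, p_{t+1})` plus the stability term
`⟨p_t - p_{t+1}, ℓ̂_t⟩ - D(p_{t+1}, p_t)`.

The divergence `D` splits coordinatewise into an entropy part, which dominates
`(x - y)² / (2 (x + y))`, and a log-barrier part. By AM-GM the entropy part pays for every
coordinate that lies in `S` or has `p_{t,i} ≤ 1/2` (then `ℓ̂_{t,i} ≤ 2`). At most one coordinate
`i₀ ∉ S` has `p_{t,i₀} > 1/2`; the mass `a` it loses goes to the other coordinates, of total mass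
`q = 1 - p_{t,i₀} ≤ 1 / ℓ̂_{t,i₀}`. If `a ≤ 3q`, the entropy of the other coordinates pays for it
(Cauchy-Schwarz); otherwise one of them grows by a factor at least `1 + a/q ≥ 4`, and the log
barrier pays `a / (2q) ≥ a ℓ̂_{t,i₀} / 2`.
-/

open Finset

open Real

noncomputable def entropyBregman (x y : ℝ) : ℝ := x * log x - x * log y - x + y

noncomputable def logBarrierBregman (x y : ℝ) : ℝ := log y - log x + x / y - 1

lemma mul_le_sq_div_add_mul_sq {c : ℝ} (hc : 0 < c) (a b : ℝ) :
    a * b ≤ a ^ 2 / (4 * c) + c * b ^ 2 := by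
  have key : a ^ 2 / (4 * c) + c * b ^ 2 - a * b = (a - 2 * c * b) ^ 2 / (4 * c) := by
    field_simp
    ring
  nlinarith [div_nonneg (sq_nonneg (a - 2 * c * b)) (by positivity : 0 ≤ 4 * c)]

lemma sq_sub_div_le_entropyBregman {x y : ℝ} (hx : 0 < x) (hy : 0 < y) :
    (x - y) ^ 2 / (2 * (x + y)) ≤ entropyBregman x y := by
  obtain ⟨s, hs, rfl⟩ : ∃ s, 0 < s ∧ s ^ 2 = x := ⟨√x, sqrt_pos.2 hx, sq_sqrt hx.le⟩
  obtain ⟨r, hr, rfl⟩ : ∃ r, 0 < r ∧ r ^ 2 = y := ⟨√y, sqrt_pos.2 hy, sq_sqrt hy.le⟩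
  -- `log (s / r) ≥ 1 - r / s` gives the Hellinger-type bound `(s - r)² ≤ entropyBregman (s²) (r²)`
  have hlog : 1 - r / s ≤ log s - log r := by
    simpa [inv_div, log_div hs.ne' hr.ne'] using one_sub_inv_le_log_of_pos (div_pos hs hr)
  have hhell : (s - r) ^ 2 ≤ entropyBregman (s ^ 2) (r ^ 2) := by
    have hmul : s ^ 2 * (1 - r / s) = s ^ 2 - s * r := by field_simp
    unfold entropyBregman
    rw [log_pow, log_pow]
    push_cast
    nlinarith [mul_le_mul_of_nonneg_left hlog (sq_nonneg s)]
  calc (s ^ 2 - r ^ 2) ^ 2 / (2 * (s ^ 2 + r ^ 2)) ≤ (s - r) ^ 2 := by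
        rw [div_le_iff₀ (by positivity)]
        nlinarith [pow_two_nonneg ((s - r) ^ 2)]
    _ ≤ _ := hhell

lemma entropyBregman_nonneg {x y : ℝ} (hx : 0 < x) (hy : 0 < y) : 0 ≤ entropyBregman x y :=
  (div_nonneg (sq_nonneg _) (by positivity)).trans (sq_sub_div_le_entropyBregman hx hy)

lemma logBarrierBregman_nonneg {x y : ℝ} (hx : 0 < x) (hy : 0 < y) :
    0 ≤ logBarrierBregman x y := by
  have := log_le_sub_one_of_pos (div_pos hx hy)
  rw [log_div hx.ne' hy.ne'] at this
  unfold logBarrierBregman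
  linarith

lemma sub_one_div_two_le_logBarrierBregman {x y : ℝ} (hy : 0 < y) (h : 4 * y ≤ x) :
    (x / y - 1) / 2 ≤ logBarrierBregman x y := by
  have hr : 4 ≤ x / y := by rwa [le_div_iff₀ hy]
  -- `log r ≤ r / e`, and `r / e ≤ (r - 1) / 2` once `r ≥ 4` because `e > 8 / 3`
  have hlog : log (x / y) ≤ x / y / exp 1 := by
    have := log_le_sub_one_of_pos (div_pos (by linarith : 0 < x / y) (exp_pos 1))
    rwa [log_div (by positivity) (exp_pos 1).ne', log_exp, sub_le_sub_iff_right] at this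
  have he : x / y / exp 1 ≤ (x / y - 1) / 2 := by
    rw [div_le_iff₀ (exp_pos 1)]
    nlinarith [exp_one_gt_d9]
  rw [log_div (by linarith) hy.ne'] at hlog
  unfold logBarrierBregman
  linarith

variable {ι : Type*}

lemma sq_sum_sub_div_le_sum_entropyBregman (s : Finset ι) {x y : ι → ℝ}
    (hx : ∀ i ∈ s, 0 < x i) (hy : ∀ i ∈ s, 0 < y i) :
    (∑ i ∈ s, x i - ∑ i ∈ s, y i) ^ 2 / (2 * (∑ i ∈ s, x i + ∑ i ∈ s, y i)) ≤
      ∑ i ∈ s, entropyBregman (x i) (y i) := by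
  have titu := sq_sum_div_le_sum_sq_div s (fun i => x i - y i)
    (g := fun i => 2 * (x i + y i)) fun i hi => by linarith [hx i hi, hy i hi]
  rw [sum_sub_distrib, ← mul_sum, sum_add_distrib] at titu
  exact titu.trans (sum_le_sum fun i hi => sq_sub_div_le_entropyBregman (hx i hi) (hy i hi))

lemma exists_sub_one_div_two_le_logBarrierBregman {s : Finset ι} (hs : s.Nonempty)
    {x y : ι → ℝ} (hy : ∀ i ∈ s, 0 < y i) (h : 4 * ∑ i ∈ s, y i ≤ ∑ i ∈ s, x i) :
    ∃ i ∈ s, ((∑ i ∈ s, x i) / ∑ i ∈ s, y i - 1) / 2 ≤ logBarrierBregman (x i) (y i) := by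
  have hY : 0 < ∑ i ∈ s, y i := sum_pos hy hs
  obtain ⟨i, hi, hle⟩ := exists_le_of_sum_le hs
    (f := fun i => (∑ j ∈ s, x j) * y i) (g := fun i => (∑ j ∈ s, y j) * x i)
    (by rw [← mul_sum, ← mul_sum, mul_comm])
  have hratio : (∑ j ∈ s, x j) / ∑ j ∈ s, y j ≤ x i / y i := by
    rw [div_le_div_iff₀ hY (hy i hi)]
    linarith
  refine ⟨i, hi, le_trans ?_ (sub_one_div_two_le_logBarrierBregman (hy i hi) ?_)⟩
  · linarith
  · have h4 : 4 ≤ (∑ j ∈ s, x j) / ∑ j ∈ s, y j := by rwa [le_div_iff₀ hY]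
    exact (le_div_iff₀ (hy i hi)).1 (h4.trans hratio)

lemma sub_mul_le_entropyBregman_add {η x y ℓ : ℝ} (hη : 0 < η) (hx : 0 < x) (hy : 0 < y)
    (hℓ : 0 ≤ ℓ) : (y - x) * ℓ ≤ entropyBregman x y / (2 * η) + 2 * η * y * ℓ ^ 2 := by
  rcases le_total y x with hyx | hxy
  · have hneg : (y - x) * ℓ ≤ 0 := mul_nonpos_of_nonpos_of_nonneg (by linarith) hℓ
    have := div_nonneg (entropyBregman_nonneg hx hy) (by positivity : 0 ≤ 2 * η)
    linarith [(by positivity : 0 ≤ 2 * η * y * ℓ ^ 2)]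
  · have hDe : (y - x) ^ 2 / (4 * y) ≤ entropyBregman x y := by
      refine le_trans ?_ (sq_sub_div_le_entropyBregman hx hy)
      rw [sub_sq_comm]
      exact div_le_div_of_nonneg_left (sq_nonneg _) (by positivity) (by linarith)
    calc (y - x) * ℓ ≤ (y - x) ^ 2 / (4 * (2 * η * y)) + 2 * η * y * ℓ ^ 2 :=
          mul_le_sq_div_add_mul_sq (by positivity) _ _
      _ = (y - x) ^ 2 / (4 * y) / (2 * η) + 2 * η * y * ℓ ^ 2 := by field_simp
      _ ≤ _ := by gcongr

lemma sum_sub_sum_mul_le_entropyBregman_add_logBarrierBregman {s : Finset ι} {x y : ι → ℝ}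
    {η c ℓ : ℝ} (hη : 0 < η) (hc : 2 ≤ c) (hx : ∀ i ∈ s, 0 < x i) (hy : ∀ i ∈ s, 0 < y i)
    (hℓ : 0 ≤ ℓ) (hyℓ : (∑ i ∈ s, y i) * ℓ ≤ 1) :
    (∑ i ∈ s, x i - ∑ i ∈ s, y i) * ℓ ≤
      5 * η * ℓ + (∑ i ∈ s, entropyBregman (x i) (y i)) / (2 * η) +
        c * ∑ i ∈ s, logBarrierBregman (x i) (y i) := by
  have hDe : 0 ≤ ∑ i ∈ s, entropyBregman (x i) (y i) :=
    sum_nonneg fun i hi => entropyBregman_nonneg (hx i hi) (hy i hi)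
  have hDb : 0 ≤ ∑ i ∈ s, logBarrierBregman (x i) (y i) :=
    sum_nonneg fun i hi => logBarrierBregman_nonneg (hx i hi) (hy i hi)
  obtain rfl | hs := s.eq_empty_or_nonempty
  · simp only [sum_empty, sub_self, zero_mul]
    positivity
  set X := ∑ i ∈ s, x i
  set Y := ∑ i ∈ s, y i
  have hY : 0 < Y := sum_pos hy hs
  have hX : 0 < X := sum_pos hx hs
  rcases le_or_gt (X - Y) (3 * Y) with hsmall | hlarge
  -- a small transfer of mass is paid for by the entropy
  · have hent : (X - Y) ^ 2 / (10 * Y) ≤ ∑ i ∈ s, entropyBregman (x i) (y i) := by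
      refine le_trans ?_ (sq_sum_sub_div_le_sum_entropyBregman s hx hy)
      exact div_le_div_of_nonneg_left (sq_nonneg _) (by positivity) (by linarith)
    calc (X - Y) * ℓ ≤ (X - Y) ^ 2 / (4 * (5 * η * Y)) + 5 * η * Y * ℓ ^ 2 :=
          mul_le_sq_div_add_mul_sq (by positivity) _ _
      _ = (X - Y) ^ 2 / (10 * Y) / (2 * η) + 5 * η * ℓ * (Y * ℓ) := by field_simp; ring
      _ ≤ (∑ i ∈ s, entropyBregman (x i) (y i)) / (2 * η) + 5 * η * ℓ * 1 := by gcongr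
      _ ≤ _ := by nlinarith
  -- a large one forces some ratio `x i / y i ≥ 4`, which the log barrier pays for
  · obtain ⟨i, hi, hbar⟩ := exists_sub_one_div_two_le_logBarrierBregman hs hy (by linarith)
    change (X / Y - 1) / 2 ≤ _ at hbar
    have hsingle : logBarrierBregman (x i) (y i) ≤ ∑ i ∈ s, logBarrierBregman (x i) (y i) :=
      single_le_sum (fun j hj => logBarrierBregman_nonneg (hx j hj) (hy j hj)) hi
    have hratio : X / Y - 1 = (X - Y) / Y := by field_simp
    calc (X - Y) * ℓ = (X - Y) / Y * (Y * ℓ) := by field_simp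
      _ ≤ (X - Y) / Y * 1 := by gcongr; exact (div_pos (by linarith) hY).le
      _ ≤ 2 * ∑ i ∈ s, logBarrierBregman (x i) (y i) := by linarith
      _ ≤ _ := by
        have := mul_le_mul_of_nonneg_right hc hDb
        have : 0 ≤ 5 * η * ℓ + (∑ i ∈ s, entropyBregman (x i) (y i)) / (2 * η) := by positivity
        linarith

section Stability

variable [DecidableEq ι]

def stabilityTerm (S : Finset ι) (η : ℝ) (p ℓ : ι → ℝ) (i : ι) : ℝ :=
  if i ∈ S then 8 * η * (p i * ℓ i ^ 2) else 16 * η * (p i * ℓ i)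

variable {S : Finset ι} {η : ℝ} {p p' ℓ : ι → ℝ}

lemma sub_mul_le_stabilityTerm {i : ι} (hη : 0 < η) (hp : 0 < p i) (hp' : 0 < p' i)
    (hℓ : 0 ≤ ℓ i) (hℓS : i ∉ S → ℓ i ≤ 2) :
    (p i - p' i) * ℓ i ≤
      entropyBregman (p' i) (p i) / (2 * η) + stabilityTerm S η p ℓ i := by
  refine (sub_mul_le_entropyBregman_add hη hp' hp hℓ).trans (add_le_add_right ?_ _)
  unfold stabilityTerm
  split_ifs with hi
  · nlinarith [(by positivity : 0 ≤ η * p i * ℓ i ^ 2)]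
  · have hηpℓ : 0 ≤ η * p i * ℓ i := by positivity
    nlinarith [mul_le_mul_of_nonneg_left (hℓS hi) hηpℓ]

variable [Fintype ι]

lemma sum_stabilityTerm (S : Finset ι) (η : ℝ) (p ℓ : ι → ℝ) :
    ∑ i, stabilityTerm S η p ℓ i =
      8 * η * ∑ i ∈ S, p i * ℓ i ^ 2 + 16 * η * ∑ i ∈ Sᶜ, p i * ℓ i := by
  rw [← sum_add_sum_compl S, mul_sum, mul_sum]
  congr 1
  · exact sum_congr rfl fun i hi => if_pos hi
  · exact sum_congr rfl fun i hi => if_neg (mem_compl.1 hi)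

lemma sub_mul_le_stabilityTerm_add_sum_erase {c : ℝ} {i₀ : ι} (hη : 0 < η) (hc : 2 ≤ c)
    (hp : ∀ i, 0 < p i) (hp' : ∀ i, 0 < p' i) (hps : ∑ i, p i = 1) (hps' : ∑ i, p' i = 1)
    (hℓ : 0 ≤ ℓ i₀) (hi₀S : i₀ ∉ S) (hi₀ : 1 / 2 < p i₀) (hℓi₀ : ℓ i₀ ≤ 1 / (1 - p i₀)) :
    (p i₀ - p' i₀) * ℓ i₀ ≤ stabilityTerm S η p ℓ i₀ +
      (∑ i ∈ univ.erase i₀, entropyBregman (p' i) (p i)) / (2 * η) +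
        c * ∑ i ∈ univ.erase i₀, logBarrierBregman (p' i) (p i) := by
  have hps_s : ∑ i ∈ univ.erase i₀, p i = 1 - p i₀ := by
    linarith [add_sum_erase univ p (mem_univ i₀)]
  have hps'_s : ∑ i ∈ univ.erase i₀, p' i = 1 - p' i₀ := by
    linarith [add_sum_erase univ p' (mem_univ i₀)]
  have hmass : (∑ i ∈ univ.erase i₀, p i) * ℓ i₀ ≤ 1 := by
    rcases (sum_nonneg fun i _ => (hp i).le : 0 ≤ ∑ i ∈ univ.erase i₀, p i).eq_or_lt with h0 | hpos
    · rw [← h0, zero_mul]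
      exact zero_le_one
    · rw [hps_s] at hpos ⊢
      exact (le_div_iff₀' hpos).1 hℓi₀
  have htransfer := sum_sub_sum_mul_le_entropyBregman_add_logBarrierBregman hη hc
    (fun i (_ : i ∈ univ.erase i₀) => hp' i) (fun i _ => hp i) hℓ hmass
  rw [hps_s, hps'_s, sub_sub_sub_cancel_left] at htransfer
  have hi₀term : 5 * η * ℓ i₀ ≤ stabilityTerm S η p ℓ i₀ := by
    rw [stabilityTerm, if_neg hi₀S]
    nlinarith [mul_nonneg hη.le hℓ]
  linarith

theorem sum_sub_mul_le_bregman_add_stabilityTerm {c : ℝ} (hη : 0 < η) (hc : 2 ≤ c)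
    (hp : ∀ i, 0 < p i) (hp' : ∀ i, 0 < p' i) (hps : ∑ i, p i = 1) (hps' : ∑ i, p' i = 1)
    (hℓ : ∀ i, 0 ≤ ℓ i) (hℓS : ∀ i ∉ S, ℓ i ≤ 1 / (1 - p i)) :
    ∑ i, (p i - p' i) * ℓ i ≤
      ∑ i, (entropyBregman (p' i) (p i) / η + c * logBarrierBregman (p' i) (p i)) +
        ∑ i, stabilityTerm S η p ℓ i := by
  have hDe : ∀ i, 0 ≤ entropyBregman (p' i) (p i) := fun i => entropyBregman_nonneg (hp' i) (hp i)
  have hDb : ∀ i, 0 ≤ logBarrierBregman (p' i) (p i) :=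
    fun i => logBarrierBregman_nonneg (hp' i) (hp i)
  have hlight : ∀ i, (i ∉ S → p i ≤ 1 / 2) → (p i - p' i) * ℓ i ≤
      entropyBregman (p' i) (p i) / (2 * η) + stabilityTerm S η p ℓ i := by
    refine fun i hi => sub_mul_le_stabilityTerm hη (hp i) (hp' i) (hℓ i) fun hiS => ?_
    have hhalf := hi hiS
    exact (hℓS i hiS).trans (by rw [div_le_iff₀ (by linarith)]; linarith)
  by_cases hheavy : ∃ i₀, i₀ ∉ S ∧ 1 / 2 < p i₀
  · obtain ⟨i₀, hi₀S, hi₀⟩ := hheavy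
    have hothers := sum_le_sum fun i (hi : i ∈ univ.erase i₀) => hlight i fun _ => by
      linarith [add_le_sum (fun j _ => (hp j).le) (mem_univ i) (mem_univ i₀) (ne_of_mem_erase hi)]
    rw [sum_add_distrib, ← sum_div] at hothers
    have hi₀breg : 0 ≤ entropyBregman (p' i₀) (p i₀) / η + c * logBarrierBregman (p' i₀) (p i₀) :=
      add_nonneg (div_nonneg (hDe i₀) hη.le) (mul_nonneg (by linarith) (hDb i₀))
    have hhalves : (∑ i ∈ univ.erase i₀, entropyBregman (p' i) (p i)) / η =
        2 * ((∑ i ∈ univ.erase i₀, entropyBregman (p' i) (p i)) / (2 * η)) := by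
      field_simp
    simp only [← add_sum_erase univ _ (mem_univ i₀)]
    rw [sum_add_distrib, ← sum_div, ← mul_sum]
    linarith [sub_mul_le_stabilityTerm_add_sum_erase hη hc hp hp' hps hps' (hℓ i₀) hi₀S hi₀
      (hℓS i₀ hi₀S)]
  · simp only [not_exists, not_and, not_lt] at hheavy
    calc ∑ i, (p i - p' i) * ℓ i
        ≤ ∑ i, (entropyBregman (p' i) (p i) / (2 * η) + stabilityTerm S η p ℓ i) :=
          sum_le_sum fun i _ => hlight i (hheavy i)
      _ ≤ _ := by
        rw [sum_add_distrib]
        gcongr with i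
        have : entropyBregman (p' i) (p i) / (2 * η) ≤ entropyBregman (p' i) (p i) / η :=
          div_le_div_of_nonneg_left (hDe i) hη (by linarith)
        linarith [mul_nonneg (by linarith : (0 : ℝ) ≤ c) (hDb i)]

end Stability

section Bregman

variable {K : ℕ}

noncomputable def hybridReg (η c : ℝ) (p : Fin K → ℝ) : ℝ :=
  (1 / η) * ∑ i, p i * log (p i) + c * ∑ i, log (1 / p i)

lemma hasFDerivAt_hybridReg (η c : ℝ) {y : Fin K → ℝ} (hy : ∀ i, y i ≠ 0) :
    HasFDerivAt (hybridReg η c)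
      (∑ i, ((1 / η) * (log (y i) + 1) - c / y i) •
        ContinuousLinearMap.proj (R := ℝ) (φ := fun _ : Fin K => ℝ) i) y := by
  have hsum : hybridReg (K := K) η c =
      fun p => ∑ i, ((1 / η) * (p i * log (p i)) - c * log (p i)) := by
    funext p
    simp only [hybridReg, one_div, log_inv, mul_sum, mul_neg, ← sum_add_distrib, sub_eq_add_neg]
  rw [hsum]
  refine HasFDerivAt.fun_sum fun i _ => ?_
  have hder : HasDerivAt (fun a => (1 / η) * (a * log a) - c * log a)
      ((1 / η) * (log (y i) + 1) - c / y i) (y i) := by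
    simpa [div_eq_mul_inv] using
      ((hasDerivAt_mul_log (hy i)).const_mul (1 / η)).fun_sub ((hasDerivAt_log (hy i)).const_mul c)
  exact hder.comp_hasFDerivAt y
    (ContinuousLinearMap.proj (R := ℝ) (φ := fun _ : Fin K => ℝ) i).hasFDerivAt

lemma breg_hybridReg (η c : ℝ) {x y : Fin K → ℝ} (hy : ∀ i, y i ≠ 0) :
    breg (hybridReg η c) x y =
      ∑ i, (entropyBregman (x i) (y i) / η + c * logBarrierBregman (x i) (y i)) := by
  rw [breg, (hasFDerivAt_hybridReg η c hy).fderiv]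
  simp only [hybridReg, FunLike.coe_sum, Finset.sum_apply, FunLike.coe_smul, Pi.smul_apply,
    ContinuousLinearMap.proj_apply, Pi.sub_apply, smul_eq_mul, one_div, log_inv, mul_sum,
    ← sum_sub_distrib, ← sum_add_distrib]
  refine sum_congr rfl fun i _ => ?_
  have := hy i
  unfold entropyBregman logBarrierBregman
  field_simp
  ring

lemma breg_three_point (ψ : (Fin K → ℝ) → ℝ) (u q p : Fin K → ℝ) :
    breg ψ u p - breg ψ u q - breg ψ q p = fderiv ℝ ψ q (u - q) - fderiv ℝ ψ p (u - q) := by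
  simp only [breg, map_sub]
  ring

end Bregman

section MirrorDescent

variable {K : ℕ} {ψ : (Fin K → ℝ) → ℝ} {Ω : Set (Fin K → ℝ)} {ℓ p q u : Fin K → ℝ}

lemma sum_sub_mul_add_fderiv_sub_fderiv_nonneg (hΩ : Convex ℝ Ω) (hψ : DifferentiableAt ℝ ψ q)
    (hmin : IsMinOn (fun v => ∑ i, v i * ℓ i + breg ψ v p) Ω q) (hq : q ∈ Ω) (hu : u ∈ Ω) :
    0 ≤ ∑ i, (u i - q i) * ℓ i + (fderiv ℝ ψ q (u - q) - fderiv ℝ ψ p (u - q)) := by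
  set F := fderiv ℝ ψ p
  have hlin := HasFDerivAt.fun_sum (x := q) (u := univ) fun i _ =>
    (ContinuousLinearMap.proj (R := ℝ) (φ := fun _ : Fin K => ℝ) i).hasFDerivAt.mul_const (ℓ i)
  have hF : HasFDerivAt (fun v => F (v - p)) F q := by
    simpa only [map_sub] using F.hasFDerivAt.sub_const (F p)
  have hderiv := hlin.add ((hψ.hasFDerivAt.sub_const (ψ p)).sub hF)
  have := hmin.localize.hasFDerivWithinAt_nonneg hderiv.hasFDerivWithinAt
    (sub_mem_posTangentConeAt_of_segment_subset (hΩ.segment_subset hq hu))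
  simpa [mul_comm] using this

lemma omd_step_le (hΩ : Convex ℝ Ω) (hψ : DifferentiableAt ℝ ψ q)
    (hmin : IsMinOn (fun v => ∑ i, v i * ℓ i + breg ψ v p) Ω q) (hq : q ∈ Ω) (hu : u ∈ Ω) :
    ∑ i, (p i - u i) * ℓ i ≤
      breg ψ u p - breg ψ u q + (∑ i, (p i - q i) * ℓ i - breg ψ q p) := by
  have hopt := sum_sub_mul_add_fderiv_sub_fderiv_nonneg hΩ hψ hmin hq hu
  have hsplit : ∑ i, (p i - u i) * ℓ i = ∑ i, (p i - q i) * ℓ i - ∑ i, (u i - q i) * ℓ i := by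
    rw [← sum_sub_distrib]
    exact sum_congr rfl fun i _ => by ring
  linarith [breg_three_point ψ u q p]

end MirrorDescent

def clippedSimplex (ι : Type*) [Fintype ι] (ε : ℝ) : Set (ι → ℝ) :=
  {p | p ∈ stdSimplex ℝ ι ∧ ∀ i, ε ≤ p i}

lemma convex_clippedSimplex [Fintype ι] (ε : ℝ) : Convex ℝ (clippedSimplex ι ε) :=
  (convex_stdSimplex ℝ ι).inter (convex_Ici fun _ => ε)

lemma pos_of_mem_clippedSimplex [Fintype ι] {ε : ℝ} (hε : 0 < ε) {p : ι → ℝ}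
    (hp : p ∈ clippedSimplex ι ε) (i : ι) : 0 < p i :=
  hε.trans_le (hp.2 i)

lemma breg_hybridReg_nonneg {K : ℕ} {η c : ℝ} (hη : 0 ≤ η) (hc : 0 ≤ c) {x y : Fin K → ℝ}
    (hx : ∀ i, 0 < x i) (hy : ∀ i, 0 < y i) : 0 ≤ breg (hybridReg η c) x y := by
  rw [breg_hybridReg _ _ fun i => (hy i).ne']
  exact sum_nonneg fun i _ => add_nonneg (div_nonneg (entropyBregman_nonneg (hx i) (hy i)) hη)
    (mul_nonneg hc (logBarrierBregman_nonneg (hx i) (hy i)))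

theorem hybridReg_omd_step_le {K : ℕ} {S : Finset (Fin K)} {ε η c : ℝ}
    (hε : 0 < ε) (hη : 0 < η) (hc : 2 ≤ c) {p q u ℓ : Fin K → ℝ}
    (hp : p ∈ clippedSimplex (Fin K) ε) (hq : q ∈ clippedSimplex (Fin K) ε)
    (hu : u ∈ clippedSimplex (Fin K) ε) (hℓ : ∀ i, 0 ≤ ℓ i) (hℓS : ∀ i ∉ S, ℓ i ≤ 1 / (1 - p i))
    (hmin : IsMinOn (fun v => ∑ i, v i * ℓ i + breg (hybridReg η c) v p)
      (clippedSimplex (Fin K) ε) q) :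
    ∑ i, (p i - u i) * ℓ i ≤
      breg (hybridReg η c) u p - breg (hybridReg η c) u q + ∑ i, stabilityTerm S η p ℓ i := by
  have hppos := pos_of_mem_clippedSimplex hε hp
  have hqpos := pos_of_mem_clippedSimplex hε hq
  refine (omd_step_le (convex_clippedSimplex ε)
    (hasFDerivAt_hybridReg η c fun i => (hqpos i).ne').differentiableAt hmin hq hu).trans
    (add_le_add_right ?_ _)
  rw [sub_le_iff_le_add', breg_hybridReg η c fun i => (hppos i).ne']
  exact sum_sub_mul_le_bregman_add_stabilityTerm hη hc hppos hqpos hp.1.2 hq.1.2 hℓ hℓS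

theorem stmt5_general (K T : ℕ) (hK : 2 ≤ K) (hT : 2 * K ≤ T)
    (S : Finset (Fin K)) (η : ℝ) (hη : 0 < η)
    (Ω : Set (Fin K → ℝ))
    (hΩ : Ω = {p | p ∈ stdSimplex ℝ (Fin K) ∧ ∀ i, 1 / (T : ℝ) ≤ p i})
    (ψ : (Fin K → ℝ) → ℝ)
    (hψ : ψ = fun p => (1 / η) * ∑ i, p i * Real.log (p i)
      + (64 * (K : ℝ)) * ∑ i, Real.log (1 / p i))
    (p ℓ : ℕ → Fin K → ℝ)
    (hp1 : p 1 ∈ Ω)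
    (hℓ0 : ∀ t ∈ Finset.Icc 1 T, ∀ i, 0 ≤ ℓ t i)
    (hℓSc : ∀ t ∈ Finset.Icc 1 T, ∀ i ∉ S, ℓ t i ≤ 1 / (1 - p t i))
    (hupd : ∀ t ∈ Finset.Icc 1 T, p (t + 1) ∈ Ω ∧ ∀ q ∈ Ω,
      (∑ i, p (t + 1) i * ℓ t i) + breg ψ (p (t + 1)) (p t)
        ≤ (∑ i, q i * ℓ t i) + breg ψ q (p t)) :
    ∀ u ∈ Ω,
      ∑ t ∈ Finset.Icc 1 T, ∑ i, (p t i - u i) * ℓ t i ≤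
        breg ψ u (p 1)
          + 8 * η * ∑ t ∈ Finset.Icc 1 T, ∑ i ∈ S, p t i * ℓ t i ^ 2
          + 16 * η * ∑ t ∈ Finset.Icc 1 T, ∑ i ∈ Sᶜ, p t i * ℓ t i := by
  intro u hu
  obtain rfl : ψ = hybridReg η (64 * K) := hψ
  obtain rfl : Ω = clippedSimplex (Fin K) (1 / T) := hΩ
  have hε : (0 : ℝ) < 1 / T := one_div_pos.2 (by exact_mod_cast (by omega : 0 < T))
  have hc : (2 : ℝ) ≤ 64 * K := by
    have : (2 : ℝ) ≤ K := by exact_mod_cast hK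
    linarith
  have hmem : ∀ t ∈ Icc 1 (T + 1), p t ∈ clippedSimplex (Fin K) (1 / T) := by
    rintro (_ | _ | t) ht
    · simp at ht
    · exact hp1
    · exact (hupd (t + 1) (mem_Icc.2 ⟨by omega, by have := mem_Icc.1 ht; omega⟩)).1
  have hstep : ∀ t ∈ Icc 1 T, ∑ i, (p t i - u i) * ℓ t i ≤
      breg (hybridReg η (64 * K)) u (p t) - breg (hybridReg η (64 * K)) u (p (t + 1)) +
        ∑ i, stabilityTerm S η (p t) (ℓ t) i := fun t ht =>
    hybridReg_omd_step_le hε hη hc (hmem t (Icc_subset_Icc_right (by omega) ht))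
      (hupd t ht).1 hu (hℓ0 t ht) (hℓSc t ht) (isMinOn_iff.2 (hupd t ht).2)
  have hlast : 0 ≤ breg (hybridReg η (64 * K)) u (p (T + 1)) :=
    breg_hybridReg_nonneg hη.le (by linarith) (pos_of_mem_clippedSimplex hε hu)
      (pos_of_mem_clippedSimplex hε (hmem (T + 1) (mem_Icc.2 ⟨by omega, le_rfl⟩)))
  have htel := sum_Icc_sub (by omega : 1 ≤ T) fun t => breg (hybridReg η (64 * K)) u (p t)
  rw [sum_sub_distrib] at htel
  refine (sum_le_sum hstep).trans ?_
  simp only [sum_add_distrib, sum_sub_distrib, sum_stabilityTerm, ← mul_sum]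
  linarith

/-- Pathwise regret bound underlying Theorem 2 of the paper: OMD over a clipped
simplex with the hybrid Shannon-entropy-plus-log-barrier regularizer. -/
theorem stmt5 (K T : ℕ) (hK : 2 ≤ K) (hT : 2 * K ≤ T)
    (S : Finset (Fin K)) (η : ℝ) (hη : 0 < η)
    (Ω : Set (Fin K → ℝ))
    (hΩ : Ω = {p | p ∈ stdSimplex ℝ (Fin K) ∧ ∀ i, 1 / (T : ℝ) ≤ p i})
    (ψ : (Fin K → ℝ) → ℝ)
    (hψ : ψ = fun p => (1 / η) * ∑ i, p i * Real.log (p i)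
      + (64 * (K : ℝ)) * ∑ i, Real.log (1 / p i))
    (p ℓ : ℕ → Fin K → ℝ)
    (hp1 : p 1 ∈ Ω)
    (hℓ0 : ∀ t ∈ Finset.Icc 1 T, ∀ i, 0 ≤ ℓ t i)
    (hℓS : ∀ t ∈ Finset.Icc 1 T, ∀ i ∈ S, ℓ t i ≤ 1 / p t i)
    (hℓSc : ∀ t ∈ Finset.Icc 1 T, ∀ i ∉ S, ℓ t i ≤ 1 / (1 - p t i))
    (hupd : ∀ t ∈ Finset.Icc 1 T, p (t + 1) ∈ Ω ∧ ∀ q ∈ Ω,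
      (∑ i, p (t + 1) i * ℓ t i) + breg ψ (p (t + 1)) (p t)
        ≤ (∑ i, q i * ℓ t i) + breg ψ q (p t)) :
    ∀ u ∈ Ω,
      ∑ t ∈ Finset.Icc 1 T, ∑ i, (p t i - u i) * ℓ t i ≤
        breg ψ u (p 1)
          + 8 * η * ∑ t ∈ Finset.Icc 1 T, ∑ i ∈ S, p t i * ℓ t i ^ 2
          + 16 * η * ∑ t ∈ Finset.Icc 1 T, ∑ i ∈ Sᶜ, p t i * ℓ t i :=
  stmt5_general K T hK hT S η hη Ω hΩ ψ hψ p ℓ hp1 hℓ0 hℓSc hupd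
end
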